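/- arXiv:1303.5777 — 8 statements merged into one kernel-verified Lean document; each statement's English description precedes it below -/
import Mathlib

section
/- For all natural numbers e, r, and k, there exists a natural number M such that for every coloring f of the e-element subsets of {0, 1, …, M} into r colors, there is a nonempty subset Y of {0, 1, …, M} such that f is constant on the e-element subsets of Y and the cardinality of Y is at least min(Y) + k − 1. -/
/-!
Compactness reduces the theorem to the infinite Ramsey theorem. If every `M` admitted a bad
colouring `f M`, then along a nonprincipal ultrafilter the colourings `f M` converge pointwise to a
colouring `g` of the `e`-subsets of `ℕ`. Infinite Ramsey yields an infinite `g`-homogeneous set `H`,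
and any finite `Y ⊆ H` containing `min H` with at least `min H + k` elements is relatively large.
For `M` far enough along the ultrafilter, `f M` agrees with `g` on the finitely many `e`-subsets of
`Y`, so `Y` is `f M`-homogeneous, contradicting the badness of `f M`.

Infinite Ramsey for `(e + 1)`-subsets follows from the case `e` by repeatedly pinning the least
element `a n` of the current infinite set and shrinking the rest so that the colour of
`{a n} ∪ s` depends only on `n`; the pigeonhole principle on these colours finishes.
-/

open Filter Set

lemma Ultrafilter.exists_eventually_eq_of_eventually_lt {ι : Type*} (U : Ultrafilter ι)
    {u : ι → ℕ} {r : ℕ} (h : ∀ᶠ i in U, u i < r) : ∃ c < r, ∀ᶠ i in U, u i = c :=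
  (U.eventually_exists_mem_iff (finite_Iio r)).mp (h.mono fun i hi => ⟨u i, hi, rfl⟩)

lemma exists_infinite_fiber_of_forall_lt {col : ℕ → ℕ} {r : ℕ} (h : ∀ n, col n < r) :
    ∃ c < r, {n | col n = c}.Infinite := by
  obtain ⟨c, hc, hev⟩ :=
    (hyperfilter ℕ).exists_eventually_eq_of_eventually_lt (Eventually.of_forall h)
  exact ⟨c, hc, fun hfin => hfin.notMem_hyperfilter hev⟩

lemma Set.Infinite.exists_finset_min'_add_le_card {H : Set ℕ} (hH : H.Infinite) (k : ℕ) :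
    ∃ Y : Finset ℕ, ↑Y ⊆ H ∧ ∃ hY : Y.Nonempty, Y.min' hY + k ≤ Y.card := by
  obtain ⟨m, hm⟩ := hH.nonempty
  obtain ⟨Z, hZH, hZ⟩ := hH.exists_subset_card_eq (m + k)
  refine ⟨insert m Z, by simpa [Set.insert_subset_iff] using ⟨hm, hZH⟩,
    Finset.insert_nonempty m Z, ?_⟩
  calc (insert m Z).min' _ + k ≤ m + k := by grw [Finset.min'_le _ _ (Finset.mem_insert_self m Z)]
    _ = Z.card := hZ.symm
    _ ≤ (insert m Z).card := Finset.card_le_card (Finset.subset_insert m Z)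

def InfiniteRamsey (e : ℕ) : Prop :=
  ∀ (r : ℕ) (g : Finset ℕ → ℕ) (A : Set ℕ), A.Infinite →
    (∀ s : Finset ℕ, ↑s ⊆ A → s.card = e → g s < r) →
    ∃ H ⊆ A, H.Infinite ∧ ∃ c < r, ∀ s : Finset ℕ, ↑s ⊆ H → s.card = e → g s = c

theorem infiniteRamsey_zero : InfiniteRamsey 0 := fun _ g A hA hg =>
  ⟨A, subset_rfl, hA, g ∅, hg ∅ (by simp) rfl, fun s _ hs => by rw [Finset.card_eq_zero.mp hs]⟩

section

variable {e r : ℕ} {g : Finset ℕ → ℕ}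

theorem exists_homogeneous_of_minHomogeneous {a : ℕ → ℕ} (ha : StrictMono a) {col : ℕ → ℕ}
    (hcol : ∀ n, col n < r)
    (hg : ∀ n (s : Finset ℕ), ↑s ⊆ a '' Ioi n → s.card = e → g (insert (a n) s) = col n) :
    ∃ H ⊆ range a, H.Infinite ∧ ∃ c < r,
      ∀ s : Finset ℕ, ↑s ⊆ H → s.card = e + 1 → g s = c := by
  obtain ⟨c, hc, hinf⟩ := exists_infinite_fiber_of_forall_lt hcol
  refine ⟨a '' {n | col n = c}, image_subset_range _ _, hinf.image ha.injective.injOn, c, hc, ?_⟩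
  intro s hs hcard
  have hne : s.Nonempty := Finset.card_pos.1 (by omega)
  obtain ⟨n, hn, hmin⟩ := hs (s.min'_mem hne)
  have hrest : ↑(s.erase (s.min' hne)) ⊆ a '' Ioi n := by
    intro x hx
    obtain ⟨hx_ne, hx_s⟩ := Finset.mem_erase.1 hx
    obtain ⟨m, -, rfl⟩ := hs hx_s
    refine ⟨m, ha.lt_iff_lt.1 ?_, rfl⟩
    rw [hmin]
    exact lt_of_le_of_ne (s.min'_le _ hx_s) (Ne.symm hx_ne)
  have h := hg n _ hrest <| by
    rw [Finset.card_erase_of_mem (s.min'_mem hne), hcard, Nat.add_sub_cancel]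
  rw [hmin, Finset.insert_erase (s.min'_mem hne)] at h
  exact h.trans hn

namespace InfiniteRamsey

theorem exists_infinite_insert_homogeneous (ih : InfiniteRamsey e) {B : Set ℕ} (hB : B.Infinite)
    {a : ℕ} (ha : a ∈ B)
    (hg : ∀ s : Finset ℕ, ↑s ⊆ B → s.card = e + 1 → g s < r) :
    ∃ B' ⊆ B ∩ Ioi a, B'.Infinite ∧ ∃ c < r,
      ∀ s : Finset ℕ, ↑s ⊆ B' → s.card = e → g (insert a s) = c := by
  have hB' : (B ∩ Ioi a).Infinite := by
    simpa [sdiff_eq, compl_Iic] using hB.sdiff (finite_Iic a)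
  refine ih r (fun s => g (insert a s)) _ hB' fun s hs hcard => hg _ ?_ ?_
  · rw [Finset.coe_insert]
    exact Set.insert_subset ha (hs.trans inter_subset_left)
  · rw [Finset.card_insert_of_notMem fun h => lt_irrefl a (hs h).2, hcard]

theorem exists_strictMono_minHomogeneous (ih : InfiniteRamsey e) {A : Set ℕ} (hA : A.Infinite)
    (hg : ∀ s : Finset ℕ, ↑s ⊆ A → s.card = e + 1 → g s < r) :
    ∃ a : ℕ → ℕ, StrictMono a ∧ range a ⊆ A ∧ ∃ col : ℕ → ℕ, (∀ n, col n < r) ∧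
      ∀ n (s : Finset ℕ), ↑s ⊆ a '' Ioi n → s.card = e → g (insert (a n) s) = col n := by
  have step : ∀ B ⊆ A, B.Infinite → ∃ B' ⊆ B ∩ Ioi (sInf B), B'.Infinite ∧ ∃ c < r,
      ∀ s : Finset ℕ, ↑s ⊆ B' → s.card = e → g (insert (sInf B) s) = c :=
    fun B hBA hB => ih.exists_infinite_insert_homogeneous hB (Nat.sInf_mem hB.nonempty)
      fun s hs => hg s (hs.trans hBA)
  choose! next hnext hinf col hcol hpinned using step
  set F : ℕ → Set ℕ := fun n => next^[n] A
  have hF_succ : ∀ n, F (n + 1) = next (F n) := fun n => Function.iterate_succ_apply' _ _ _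
  have hF : ∀ n, F n ⊆ A ∧ (F n).Infinite := by
    intro n
    induction n with
    | zero => exact ⟨subset_rfl, hA⟩
    | succ n ihn =>
      rw [hF_succ]
      exact ⟨(hnext _ ihn.1 ihn.2).trans (inter_subset_left.trans ihn.1), hinf _ ihn.1 ihn.2⟩
  have hF_le : ∀ n, F (n + 1) ⊆ F n ∩ Ioi (sInf (F n)) := fun n =>
    hF_succ n ▸ hnext _ (hF n).1 (hF n).2
  have hF_anti : Antitone F := antitone_nat_of_succ_le fun n => (hF_le n).trans inter_subset_left
  have hmem : ∀ n, sInf (F n) ∈ F n := fun n => Nat.sInf_mem (hF n).2.nonempty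
  refine ⟨fun n => sInf (F n), strictMono_nat_of_lt_succ fun n => (hF_le n (hmem (n + 1))).2,
    range_subset_iff.2 fun n => (hF n).1 (hmem n), fun n => col (F n),
    fun n => hcol _ (hF n).1 (hF n).2, fun n s hs hcard => ?_⟩
  refine hpinned _ (hF n).1 (hF n).2 s (fun x hx => ?_) hcard
  obtain ⟨m, hm, rfl⟩ := hs hx
  exact hF_succ n ▸ hF_anti (Nat.succ_le_of_lt hm) (hmem m)

theorem succ (ih : InfiniteRamsey e) : InfiniteRamsey (e + 1) := by
  intro r g A hA hg
  obtain ⟨a, ha, haA, col, hcol, hpinned⟩ := ih.exists_strictMono_minHomogeneous hA hg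
  obtain ⟨H, hHa, hH, c, hc, hHc⟩ := exists_homogeneous_of_minHomogeneous ha hcol hpinned
  exact ⟨H, hHa.trans haA, hH, c, hc, hHc⟩

end InfiniteRamsey

end

theorem infiniteRamsey (e : ℕ) : InfiniteRamsey e := by
  induction e with
  | zero => exact infiniteRamsey_zero
  | succ e ih => exact ih.succ

/-- **Paris–Harrington theorem (PH).** For all natural numbers `e`, `r`, `k`,
there exists `M` such that every coloring `f` of the `e`-element subsets of
`{0, 1, …, M}` into `r` colors admits a nonempty `f`-homogeneous subset `Y` of
`{0, 1, …, M}` whose cardinality is at least `min Y + k - 1`. -/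
theorem paris_harrington (e r k : ℕ) :
    ∃ M : ℕ, ∀ f : Finset ℕ → ℕ,
      (∀ s : Finset ℕ, s ⊆ Finset.range (M + 1) → s.card = e → f s < r) →
      ∃ Y : Finset ℕ, Y ⊆ Finset.range (M + 1) ∧ ∃ hY : Y.Nonempty,
        (∀ s t : Finset ℕ, s ⊆ Y → t ⊆ Y → s.card = e → t.card = e → f s = f t) ∧
        Y.card + 1 ≥ Y.min' hY + k := by
  by_contra! hbad
  choose f hf_lt hf_bad using hbad
  set U := hyperfilter ℕ
  have hU_range (s : Finset ℕ) : ∀ᶠ M in U, s ⊆ Finset.range (M + 1) :=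
    Nat.hyperfilter_le_atTop <| (eventually_all_finset s).2 fun x _ =>
      (eventually_ge_atTop x).mono fun M hM => Finset.mem_range.2 (Nat.lt_succ_of_le hM)
  have hlim (s : Finset ℕ) (hs : s.card = e) : ∃ c < r, ∀ᶠ M in U, f M s = c :=
    U.exists_eventually_eq_of_eventually_lt ((hU_range s).mono fun M hM => hf_lt M s hM hs)
  choose! g hg_lt hg_lim using hlim
  obtain ⟨H, -, hH, c, -, hHc⟩ := infiniteRamsey e r g univ infinite_univ fun s _ => hg_lt s
  obtain ⟨Y, hYH, hY, hY_large⟩ := hH.exists_finset_min'_add_le_card k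
  obtain ⟨M, hYM, hfg⟩ := ((hU_range Y).and <| (eventually_all_finset (Y.powersetCard e)).2
    fun s hs => hg_lim s (Finset.mem_powersetCard.1 hs).2).exists
  have hhom (s : Finset ℕ) (hsY : s ⊆ Y) (hs : s.card = e) : f M s = c := by
    rw [hfg s (Finset.mem_powersetCard.2 ⟨hsY, hs⟩), hHc s ((Finset.coe_subset.2 hsY).trans hYH) hs]
  have := hf_bad M Y hYM hY fun s t hs ht hse hte => (hhom s hs hse).trans (hhom t ht hte).symm
  omega
end

section
/- Let q ≥ 1 be a natural number, let A₁, …, A_q be nonnegative integers, and let B, C, D be integers with B ≠ 0. Set W = 1 + Σ_{i=1}^{q} A_i², and for a natural number n define the real number M_q(n) as the product, over all 2^q sign choices ε ∈ {−1, +1}^q, of the factors (B²·n + C² − B²·(2D − 1)·(C² + W^q + Σ_{i=1}^{q} ε_i·√(A_i)·W^{i−1})), where √ denotes the real square root. Then the following three conditions all hold — every A_i is a perfect square (of an integer), B divides C, and D > 0 — if and only if there exists a natural number n with M_q(n) = 0. -/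
/-!
If a factor of the product vanishes, the signed sum `α = ∑ ±√Aᵢ Wⁱ` is rational. Writing
`Aᵢ = tᵢ² sᵢ` with `sᵢ` squarefree, linear independence over `ℚ` of the square roots of
squarefree numbers (from the tower argument `√p ∉ ℚ(√q : q ∈ P)` for primes `p ∉ P`) makes the
coefficient `∑ ±tⱼ Wʲ` of each `√s ≠ 1` vanish. As `0 ≤ tⱼ < W`, such a balanced base-`W`
expansion of `0` is trivial, so every `Aᵢ` is a square. Then `α` is an integer with
`|α| < W^q`, and the vanishing factor is the integer identity
`B²n + C² = B²(2D - 1)(C² + W^q + α)` with positive last factor, which forces `B ∣ C` and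
`D > 0`. Conversely, with all signs `+` the same identity can be solved for `n ≥ 0`.
-/

open Finset

theorem Subfield.exists_add_mul_of_mem_closure_insert {L : Type*} [Field L] {F : Subfield L}
    {r : L} (hr2 : r * r ∈ F) (hr : r ∉ F) {x : L}
    (hx : x ∈ Subfield.closure (insert r (F : Set L))) :
    ∃ a ∈ F, ∃ b ∈ F, x = a + b * r := by
  -- the hypothesis under which `QuadraticAlgebra F (r * r) 0` is a field
  have : Fact (∀ s : F, s ^ 2 ≠ ⟨r * r, hr2⟩ + 0 * s) := ⟨fun s hs => by
    have h : ((s : L) - r) * (s + r) = 0 := by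
      have := congrArg Subtype.val hs
      simp only [SubmonoidClass.coe_pow, zero_mul, add_zero] at this
      linear_combination this
    rcases mul_eq_zero.1 h with h | h
    · exact hr (by rw [← sub_eq_zero.1 h]; exact s.2)
    · exact hr (by rw [eq_neg_of_add_eq_zero_right h]; exact neg_mem s.2)⟩
  let f : QuadraticAlgebra F ⟨r * r, hr2⟩ 0 →+* L :=
    QuadraticAlgebra.lift (R := F) (a := ⟨r * r, hr2⟩) (b := 0) ⟨r, by
      simp only [Algebra.smul_def, mul_one, map_zero, zero_mul, add_zero]; rfl⟩
  have hle : Subfield.closure (insert r (F : Set L)) ≤ f.fieldRange := by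
    rw [Subfield.closure_le]
    rintro y (rfl | hy)
    · exact ⟨QuadraticAlgebra.omega, by simp [f]⟩
    · exact ⟨algebraMap F _ ⟨y, hy⟩, by simp only [RingHom.coe_coe, AlgHom.commutes, f]; rfl⟩
  obtain ⟨z, rfl⟩ := hle hx
  refine ⟨z.re, z.re.2, z.im, z.im.2, ?_⟩
  simp only [RingHom.coe_coe, QuadraticAlgebra.lift_apply_apply, Algebra.smul_def, mul_one, f]
  rfl

theorem Subfield.eq_zero_of_add_mul_eq_zero {L : Type*} [Field L] {F : Subfield L} {r u v : L}
    (hr : r ∉ F) (hu : u ∈ F) (hv : v ∈ F) (h : u + v * r = 0) : u = 0 ∧ v = 0 := by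
  have hv0 : v = 0 := by
    by_contra hv0
    refine hr ?_
    rw [show r = -u / v by field_simp; linear_combination h]
    exact div_mem (neg_mem hu) hv
  exact ⟨by simpa [hv0] using h, hv0⟩

theorem Subfield.mem_or_mul_mem_of_mem_closure_insert {L : Type*} [Field L] [NeZero (2 : L)]
    {F : Subfield L} {r x : L} (hr2 : r * r ∈ F) (hr : r ∉ F)
    (hx : x ∈ Subfield.closure (insert r (F : Set L))) (hx2 : x * x ∈ F) :
    x ∈ F ∨ x * r ∈ F := by
  obtain ⟨a, ha, b, hb, rfl⟩ := exists_add_mul_of_mem_closure_insert hr2 hr hx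
  obtain ⟨-, hab⟩ := eq_zero_of_add_mul_eq_zero
    (u := a * a + b * b * (r * r) - (a + b * r) * (a + b * r)) (v := 2 * a * b) hr
    (sub_mem (add_mem (mul_mem ha ha) (mul_mem (mul_mem hb hb) hr2)) hx2)
    (mul_mem (mul_mem (ofNat_mem _ 2) ha) hb) (by ring)
  rcases mul_eq_zero.1 hab with hab | rfl
  · obtain rfl : a = 0 := (mul_eq_zero.1 hab).resolve_left two_ne_zero
    right
    simpa [mul_assoc] using mul_mem hb hr2
  · simpa using Or.inl ha

noncomputable def sqrtClosure (P : Finset ℕ) : Subfield ℝ :=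
  Subfield.closure ((fun p : ℕ => √(p : ℝ)) '' P)

theorem sqrt_mem_sqrtClosure {P : Finset ℕ} {p : ℕ} (hp : p ∈ P) : √(p : ℝ) ∈ sqrtClosure P :=
  Subfield.subset_closure ⟨p, hp, rfl⟩

theorem prod_sqrt_mem_sqrtClosure {P T : Finset ℕ} (hT : T ⊆ P) :
    ∏ p ∈ T, √(p : ℝ) ∈ sqrtClosure P :=
  prod_mem fun _ hp => sqrt_mem_sqrtClosure (hT hp)

theorem sqrtClosure_insert_le (p : ℕ) (P : Finset ℕ) :
    sqrtClosure (insert p P) ≤ Subfield.closure (insert √(p : ℝ) (sqrtClosure P : Set ℝ)) := by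
  rw [sqrtClosure, Subfield.closure_le]
  rintro _ ⟨q, hq, rfl⟩
  rcases mem_insert.1 hq with rfl | hq
  · exact Subfield.subset_closure (Set.mem_insert _ _)
  · exact Subfield.subset_closure (Set.mem_insert_of_mem _ (sqrt_mem_sqrtClosure hq))

theorem exists_ratCast_eq_of_mem_sqrtClosure_empty {x : ℝ} (hx : x ∈ sqrtClosure ∅) :
    ∃ r : ℚ, (r : ℝ) = x := by
  have : sqrtClosure ∅ ≤ (Rat.castHom ℝ).fieldRange := by
    simp only [sqrtClosure, coe_empty, Set.image_empty, Subfield.closure_empty, bot_le]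
  exact this hx

theorem not_isSquare_prod_of_prime {T : Finset ℕ} (hT : ∀ p ∈ T, p.Prime) (hne : T.Nonempty) :
    ¬IsSquare (∏ p ∈ T, p) := by
  rintro ⟨k, hk⟩
  have hk0 : k ≠ 0 := by
    rintro rfl
    exact prod_ne_zero_iff.2 (fun p hp => (hT p hp).ne_zero) (by simpa using hk)
  have hTk : T = k.primeFactors := by
    rw [← Nat.primeFactors_prod hT, hk, Nat.primeFactors_mul hk0 hk0, union_self]
  have hkk : k * k ∣ k := hk ▸ hTk ▸ Nat.prod_primeFactors_dvd k
  have hk1 : k = 1 := by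
    have := Nat.le_of_dvd (Nat.pos_of_ne_zero hk0) hkk
    nlinarith [Nat.pos_of_ne_zero hk0]
  simp [hTk, hk1] at hne

theorem prod_sqrt_mul_self (T : Finset ℕ) :
    (∏ p ∈ T, √(p : ℝ)) * ∏ p ∈ T, √(p : ℝ) = ((∏ p ∈ T, p : ℕ) : ℝ) := by
  rw [← prod_mul_distrib, Nat.cast_prod]
  exact prod_congr rfl fun p _ => Real.mul_self_sqrt (Nat.cast_nonneg p)

theorem prod_sqrt_notMem_sqrtClosure {P T : Finset ℕ} (hP : ∀ p ∈ P, p.Prime)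
    (hT : ∀ p ∈ T, p.Prime) (hPT : Disjoint P T) (hne : T.Nonempty) :
    ∏ p ∈ T, √(p : ℝ) ∉ sqrtClosure P := by
  induction P using Finset.induction_on generalizing T with
  | empty =>
    intro hmem
    obtain ⟨r, hr⟩ := exists_ratCast_eq_of_mem_sqrtClosure_empty hmem
    rw [← Real.sqrt_prod _ (fun _ _ => Nat.cast_nonneg _), ← Nat.cast_prod] at hr
    exact irrational_sqrt_natCast_iff.2 (not_isSquare_prod_of_prime hT hne) ⟨r, hr⟩
  | insert p P hpP ih =>
    intro hmem
    have hp : p.Prime := hP p (mem_insert_self p P)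
    have hP' : ∀ q ∈ P, q.Prime := fun q hq => hP q (mem_insert_of_mem hq)
    have hPT' : Disjoint P T := disjoint_of_subset_left (subset_insert p P) hPT
    have hsqrtp : √(p : ℝ) ∉ sqrtClosure P := by
      simpa using ih hP' (T := {p}) (by simpa using hp) (disjoint_singleton_right.2 hpP)
        (singleton_nonempty p)
    have hpp : √(p : ℝ) * √(p : ℝ) ∈ sqrtClosure P := by
      rw [Real.mul_self_sqrt (Nat.cast_nonneg p)]
      exact natCast_mem _ p
    rcases Subfield.mem_or_mul_mem_of_mem_closure_insert hpp hsqrtp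
      (sqrtClosure_insert_le p P hmem) (by rw [prod_sqrt_mul_self]; exact natCast_mem _ _)
      with h | h
    · exact ih hP' hT hPT' hne h
    · refine ih hP' (T := insert p T) (by simpa [hp] using hT)
        (disjoint_insert_right.2 ⟨hpP, hPT'⟩) (insert_nonempty p T) ?_
      rwa [prod_insert (disjoint_left.1 hPT (mem_insert_self p P)), mul_comm]

theorem eq_zero_of_sum_powerset_mul_prod_sqrt_eq_zero {P : Finset ℕ} (hP : ∀ p ∈ P, p.Prime)
    {g : Finset ℕ → ℚ} (h : ∑ T ∈ P.powerset, (g T : ℝ) * ∏ p ∈ T, √(p : ℝ) = 0) :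
    ∀ T ∈ P.powerset, g T = 0 := by
  induction P using Finset.induction_on generalizing g with
  | empty => simpa using h
  | insert p P hpP ih =>
    have hp : p.Prime := hP p (mem_insert_self p P)
    have hP' : ∀ q ∈ P, q.Prime := fun q hq => hP q (mem_insert_of_mem hq)
    have hsqrtp : √(p : ℝ) ∉ sqrtClosure P := by
      simpa using prod_sqrt_notMem_sqrtClosure hP' (T := {p}) (by simpa using hp)
        (disjoint_singleton_right.2 hpP) (singleton_nonempty p)
    have hmem : ∀ f : Finset ℕ → ℚ,
        ∑ T ∈ P.powerset, (f T : ℝ) * ∏ p ∈ T, √(p : ℝ) ∈ sqrtClosure P :=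
      fun f => sum_mem fun T hT => mul_mem (SubfieldClass.ratCast_mem _ _)
        (prod_sqrt_mem_sqrtClosure (mem_powerset.1 hT))
    rw [sum_powerset_insert hpP] at h
    have hsplit : ∑ T ∈ P.powerset, (g (insert p T) : ℝ) * ∏ q ∈ insert p T, √(q : ℝ) =
        (∑ T ∈ P.powerset, (g (insert p T) : ℝ) * ∏ q ∈ T, √(q : ℝ)) * √(p : ℝ) := by
      rw [sum_mul]
      refine sum_congr rfl fun T hT => ?_
      rw [prod_insert (fun hpT => hpP (mem_powerset.1 hT hpT))]
      ring
    rw [hsplit] at h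
    obtain ⟨h₀, h₁⟩ := Subfield.eq_zero_of_add_mul_eq_zero hsqrtp (hmem g) (hmem _) h
    intro T hT
    rw [powerset_insert, mem_union, mem_image] at hT
    rcases hT with hT | ⟨U, hU, rfl⟩
    · exact ih hP' (by simpa using h₀) T hT
    · exact ih hP' (g := fun U => g (insert p U)) (by simpa using h₁) U hU

theorem Fin.sum_mul_pow_succ {R : Type*} [CommSemiring R] {n : ℕ} (d : Fin (n + 1) → R) (W : R) :
    ∑ i, d i * W ^ (i : ℕ) = d 0 + W * ∑ i : Fin n, d i.succ * W ^ (i : ℕ) := by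
  rw [Fin.sum_univ_succ, mul_sum]
  simp only [Fin.val_zero, pow_zero, mul_one, Fin.val_succ, pow_succ]
  exact congrArg _ (sum_congr rfl fun i _ => by ring)

theorem Int.eq_zero_of_sum_mul_pow_eq_zero {n : ℕ} {W : ℤ} {d : Fin n → ℤ} (hd : ∀ i, |d i| < W)
    (h : ∑ i, d i * W ^ (i : ℕ) = 0) : ∀ i, d i = 0 := by
  induction n with
  | zero => exact fun i => i.elim0
  | succ n ih =>
    rw [Fin.sum_mul_pow_succ] at h
    have h₀ : d 0 = 0 :=
      Int.eq_zero_of_abs_lt_dvd ⟨_, eq_neg_of_add_eq_zero_left h ▸ (mul_neg _ _).symm⟩ (hd 0)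
    have hW : W ≠ 0 := by linarith [abs_nonneg (d 0), hd 0]
    rw [h₀, zero_add, mul_eq_zero] at h
    have h' := ih (fun i => hd i.succ) (h.resolve_left hW)
    exact Fin.cases h₀ h'

theorem abs_sum_mul_pow_le {R : Type*} [CommRing R] [LinearOrder R] [IsStrictOrderedRing R]
    {n : ℕ} {W : R} {d : Fin n → R} (hd : ∀ i, |d i| ≤ W - 1) :
    |∑ i, d i * W ^ (i : ℕ)| ≤ W ^ n - 1 := by
  induction n with
  | zero => simp
  | succ n ih =>
    have hW : 0 ≤ W := by linarith [abs_nonneg (d 0), hd 0]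
    rw [Fin.sum_mul_pow_succ]
    calc |d 0 + W * ∑ i : Fin n, d i.succ * W ^ (i : ℕ)|
        ≤ |d 0| + W * |∑ i : Fin n, d i.succ * W ^ (i : ℕ)| := by
          grw [abs_add_le, abs_mul, abs_of_nonneg hW]
      _ ≤ (W - 1) + W * (W ^ n - 1) := by grw [hd 0, ih fun i => hd i.succ]
      _ = W ^ (n + 1) - 1 := by ring

theorem sqrt_eq_prod_sqrt_primeFactors {s : ℕ} (hs : Squarefree s) :
    √(s : ℝ) = ∏ p ∈ s.primeFactors, √(p : ℝ) := by
  conv_lhs => rw [← Nat.prod_primeFactors_of_squarefree hs, Nat.cast_prod]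
  exact Real.sqrt_prod _ fun _ _ => Nat.cast_nonneg _

theorem sum_ite_eq_zero_of_sum_mul_sqrt_eq_ratCast {ι : Type*} [Fintype ι] {s : ι → ℕ}
    (hs : ∀ j, Squarefree (s j)) {b : ι → ℚ} {r : ℚ} (h : ∑ j, (b j : ℝ) * √(s j : ℝ) = r)
    {i : ι} (hi : s i ≠ 1) : ∑ j, (if s j = s i then b j else 0) = 0 := by
  let P := univ.biUnion fun j => (s j).primeFactors
  have hP : ∀ p ∈ P, p.Prime := by
    simp only [P, mem_biUnion]
    rintro p ⟨j, -, hp⟩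
    exact Nat.prime_of_mem_primeFactors hp
  have hsP : ∀ j, (s j).primeFactors ∈ P.powerset := fun j =>
    mem_powerset.2 (subset_biUnion_of_mem (fun j => (s j).primeFactors) (mem_univ j))
  -- `g U` is the coefficient of `∏ p ∈ U, √p` in `∑ j, b j * √(s j) - r`
  let g : Finset ℕ → ℚ := fun U =>
    (∑ j, if (s j).primeFactors = U then b j else 0) - if U = ∅ then r else 0
  have hg : ∑ U ∈ P.powerset, (g U : ℝ) * ∏ p ∈ U, √(p : ℝ) = 0 := by
    simp only [g, Rat.cast_sub, Rat.cast_sum, apply_ite Rat.cast, Rat.cast_zero, sub_mul, sum_mul,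
      ite_mul, zero_mul, sum_sub_distrib]
    rw [sum_comm, sum_ite_eq' _ _ _]
    simp only [sum_ite_eq, hsP, if_true, empty_mem_powerset, prod_empty, mul_one, ← h, sub_eq_zero,
      sqrt_eq_prod_sqrt_primeFactors (hs _)]
  have hgi := eq_zero_of_sum_powerset_mul_prod_sqrt_eq_zero hP hg _ (hsP i)
  have hne : (s i).primeFactors ≠ ∅ := by
    simpa [Nat.primeFactors_eq_empty] using ⟨(hs i).ne_zero, hi⟩
  have hfac : ∀ j, (s j).primeFactors = (s i).primeFactors ↔ s j = s i := fun j =>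
    ⟨fun hj => by rw [← Nat.prod_primeFactors_of_squarefree (hs j),
      ← Nat.prod_primeFactors_of_squarefree (hs i), hj], fun hj => hj ▸ rfl⟩
  simpa [g, hne, hfac] using hgi

theorem isSquare_of_sum_mul_sqrt_mul_pow_eq_ratCast {n : ℕ} (a : Fin n → ℕ) {W : ℤ}
    {c : Fin n → ℤ} (hc : ∀ i, |c i| * a i < W) {r : ℚ}
    (h : ∑ i, (c i : ℝ) * √(a i : ℝ) * (W : ℝ) ^ (i : ℕ) = r) {i : Fin n} (hci : c i ≠ 0) :
    IsSquare (a i) := by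
  choose s t hst hs using fun j => Nat.sq_mul_squarefree (a j)
  by_cases hsi : s i = 1
  · exact ⟨t i, by rw [← hst i, hsi]; ring⟩
  have hsum := sum_ite_eq_zero_of_sum_mul_sqrt_eq_ratCast hs (b := fun j => c j * t j * W ^ (j : ℕ))
    (r := r) (by
      rw [← h]
      push_cast
      refine sum_congr rfl fun j _ => ?_
      rw [← hst j, Nat.cast_mul, Nat.cast_pow, Real.sqrt_mul (by positivity),
        Real.sqrt_sq (Nat.cast_nonneg _)]
      ring) hsi
  let d : Fin n → ℤ := fun j => if s j = s i then c j * t j else 0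
  have hd : ∀ j, |d j| < W := by
    intro j
    have hcj := hc j
    by_cases hj : s j = s i
    · have hta : t j ≤ a j := by
        rw [← hst j]
        exact (Nat.le_self_pow two_ne_zero _).trans
          (Nat.le_mul_of_pos_right _ (Nat.pos_of_ne_zero (hs j).ne_zero))
      simp only [d, hj, if_true, abs_mul, Nat.abs_cast]
      grw [hta]
      exact hcj
    · simp only [d, hj, if_false, abs_zero]
      exact lt_of_le_of_lt (by positivity) hcj
  have hdW : ∑ j, d j * W ^ (j : ℕ) = 0 := by
    have : (∑ j, ((d j * W ^ (j : ℕ) : ℤ) : ℚ)) = 0 := by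
      simpa [d, ite_mul] using hsum
    exact_mod_cast this
  have hdi := Int.eq_zero_of_sum_mul_pow_eq_zero hd hdW i
  simp only [d, if_true, mul_eq_zero, hci, false_or, Nat.cast_eq_zero] at hdi
  exact ⟨0, by rw [← hst i, hdi]; ring⟩

theorem Int.exists_natCast_mul_add_eq {B C D X : ℤ} (hB : B ≠ 0) (hBC : B ∣ C) (hD : 0 < D)
    (hX : 0 ≤ X) : ∃ n : ℕ, B ^ 2 * n + C ^ 2 = B ^ 2 * (2 * D - 1) * (C ^ 2 + X) := by
  obtain ⟨k, rfl⟩ := hBC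
  have hB2 : 1 ≤ B ^ 2 := by have := pow_pos (abs_pos.2 hB) 2; rw [sq_abs] at this; omega
  have hn : 0 ≤ (2 * D - 1) * ((B * k) ^ 2 + X) - k ^ 2 := by nlinarith [sq_nonneg k]
  refine ⟨((2 * D - 1) * ((B * k) ^ 2 + X) - k ^ 2).toNat, ?_⟩
  rw [Int.toNat_of_nonneg hn]
  ring

theorem Int.dvd_and_pos_of_mul_add_eq {B C D X : ℤ} {n : ℕ} (hB : B ≠ 0) (hX : 0 < X)
    (h : B ^ 2 * n + C ^ 2 = B ^ 2 * (2 * D - 1) * (C ^ 2 + X)) : B ∣ C ∧ 0 < D := by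
  have hB2 : 0 < B ^ 2 := by positivity
  refine ⟨(Int.pow_dvd_pow_iff two_ne_zero).1 ⟨(2 * D - 1) * (C ^ 2 + X) - n, by linarith⟩, ?_⟩
  have : 0 ≤ (2 * D - 1) * (B ^ 2 * (C ^ 2 + X)) := by nlinarith [sq_nonneg C]
  have := nonneg_of_mul_nonneg_left this (by positivity)
  omega

/-- The factor of `M_q(n)` indexed by the sign vector `ε`, with `W` left as a parameter. -/
noncomputable def relationFactor {q : ℕ} (A : Fin q → ℕ) (B C D W : ℤ) (n : ℕ)
    (ε : Fin q → Bool) : ℝ :=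
  (B : ℝ) ^ 2 * (n : ℝ) + (C : ℝ) ^ 2 - (B : ℝ) ^ 2 * (2 * (D : ℝ) - 1) *
    ((C : ℝ) ^ 2 + (W : ℝ) ^ q +
      ∑ i : Fin q, (if ε i then (1 : ℝ) else -1) * √(A i : ℝ) * (W : ℝ) ^ (i : ℕ))

theorem exists_relationFactor_eq_zero {q : ℕ} {A : Fin q → ℕ} {B C D W : ℤ} (hB : B ≠ 0)
    (hW : 0 ≤ W) (hA : ∀ i, IsSquare (A i)) (hBC : B ∣ C) (hD : 0 < D) :
    ∃ n, relationFactor A B C D W n (fun _ => true) = 0 := by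
  choose a ha using hA
  obtain ⟨n, hn⟩ := Int.exists_natCast_mul_add_eq (X := W ^ q + ∑ i, (a i : ℤ) * W ^ (i : ℕ))
    hB hBC hD (by positivity)
  refine ⟨n, ?_⟩
  simp only [relationFactor, if_true, one_mul, ha, Nat.cast_mul,
    Real.sqrt_mul_self (Nat.cast_nonneg _)]
  rw [sub_eq_zero]
  rw [← add_assoc] at hn
  exact_mod_cast hn

theorem isSquare_dvd_pos_of_relationFactor_eq_zero {q : ℕ} {A : Fin q → ℕ} {B C D W : ℤ} {n : ℕ}
    {ε : Fin q → Bool} (hB : B ≠ 0) (hAW : ∀ i, (A i : ℤ) < W)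
    (h : relationFactor A B C D W n ε = 0) : (∀ i, IsSquare (A i)) ∧ B ∣ C ∧ 0 < D := by
  let σ : Fin q → ℤ := fun i => if ε i then 1 else -1
  have hσ : ∀ i, |σ i| = 1 := fun i => by by_cases hi : ε i <;> simp [σ, hi]
  have hσ' : ∀ i, ((σ i : ℤ) : ℝ) = if ε i then 1 else -1 := fun i => by
    by_cases hi : ε i <;> simp [σ, hi]
  simp only [relationFactor, ← hσ'] at h
  have h2D : (2 * D - 1 : ℤ) ≠ 0 := by omega
  have hrat : ∑ i, (σ i : ℝ) * √(A i : ℝ) * (W : ℝ) ^ (i : ℕ) =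
      ((((B ^ 2 * n + C ^ 2 : ℤ) : ℚ) / ((B ^ 2 * (2 * D - 1) : ℤ) : ℚ) -
        ((C ^ 2 + W ^ q : ℤ) : ℚ) : ℚ) : ℝ) := by
    have : (2 * (D : ℝ) - 1) ≠ 0 := by exact_mod_cast h2D
    push_cast
    field_simp
    linear_combination -h
  have hsq : ∀ i, IsSquare (A i) := fun i =>
    isSquare_of_sum_mul_sqrt_mul_pow_eq_ratCast A (c := σ) (fun i => by simpa [hσ] using hAW i) hrat
      (by simp [← abs_pos, hσ])
  choose a ha using hsq
  set m : ℤ := ∑ i, σ i * a i * W ^ (i : ℕ)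
  have hm : |m| ≤ W ^ q - 1 := abs_sum_mul_pow_le fun i => by
    rw [abs_mul, hσ, one_mul, Nat.abs_cast]
    have : a i ≤ A i := by rw [ha i]; exact Nat.le_mul_self _
    linarith [hAW i, show (a i : ℤ) ≤ A i by exact_mod_cast this]
  simp only [ha, Nat.cast_mul, Real.sqrt_mul_self (Nat.cast_nonneg _)] at h
  obtain ⟨hBC, hD⟩ := Int.dvd_and_pos_of_mul_add_eq (X := W ^ q + m) hB
    (by linarith [neg_abs_le m]) (by rw [sub_eq_zero] at h; rw [← add_assoc]; exact_mod_cast h)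
  exact ⟨fun i => ⟨a i, ha i⟩, hBC, hD⟩

theorem relation_combining_general (q : ℕ) (A : Fin q → ℤ) (hA : ∀ i, 0 ≤ A i)
    (B C D : ℤ) (hB : B ≠ 0) :
    ((∀ i, ∃ a : ℤ, A i = a ^ 2) ∧ B ∣ C ∧ 0 < D) ↔
      ∃ n : ℕ,
        (∏ ε : Fin q → Bool,
          ((B : ℝ) ^ 2 * (n : ℝ) + (C : ℝ) ^ 2 -
            (B : ℝ) ^ 2 * (2 * (D : ℝ) - 1) *
              ((C : ℝ) ^ 2 + ((1 + ∑ i, A i ^ 2 : ℤ) : ℝ) ^ q +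
                ∑ i : Fin q, (if ε i then (1 : ℝ) else -1) * Real.sqrt ((A i : ℝ)) *
                  ((1 + ∑ j, A j ^ 2 : ℤ) : ℝ) ^ (i : ℕ)))) = 0 := by
  lift A to Fin q → ℕ using hA
  simp only [Int.cast_natCast, ← isSquare_iff_exists_sq, Int.isSquare_natCast_iff]
  have hAW : ∀ i, (A i : ℤ) < 1 + ∑ j, (A j : ℤ) ^ 2 := fun i => by
    have := single_le_sum (fun j _ => sq_nonneg (A j : ℤ)) (mem_univ i)
    nlinarith
  refine ⟨fun ⟨hsq, hBC, hD⟩ => ?_, fun ⟨n, hn⟩ => ?_⟩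
  · obtain ⟨n, hn⟩ :=
      exists_relationFactor_eq_zero (W := 1 + ∑ j, (A j : ℤ) ^ 2) hB (by positivity) hsq hBC hD
    exact ⟨n, prod_eq_zero (mem_univ fun _ => true) hn⟩
  · obtain ⟨ε, -, hε⟩ := prod_eq_zero_iff.1 hn
    exact isSquare_dvd_pos_of_relationFactor_eq_zero hB hAW hε

/-- **Relation-combining theorem (Matiyasevich–Robinson).** For `q ≥ 1`,
nonnegative integers `A₁, …, A_q`, and integers `B ≠ 0`, `C`, `D`, with
`W = 1 + Σ Aᵢ²`: the conditions "every `Aᵢ` is a perfect square", `B ∣ C`, and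
`D > 0` all hold iff the `2^q`-fold product over all sign choices
`∏_ε (B²n + C² − B²(2D−1)(C² + W^q + Σᵢ εᵢ √(Aᵢ) W^{i−1}))` vanishes for some
natural number `n`. -/
theorem relation_combining (q : ℕ) (hq : 1 ≤ q) (A : Fin q → ℤ) (hA : ∀ i, 0 ≤ A i)
    (B C D : ℤ) (hB : B ≠ 0) :
    ((∀ i, ∃ a : ℤ, A i = a ^ 2) ∧ B ∣ C ∧ 0 < D) ↔
      ∃ n : ℕ,
        (∏ ε : Fin q → Bool,
          ((B : ℝ) ^ 2 * (n : ℝ) + (C : ℝ) ^ 2 -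
            (B : ℝ) ^ 2 * (2 * (D : ℝ) - 1) *
              ((C : ℝ) ^ 2 + ((1 + ∑ i, A i ^ 2 : ℤ) : ℝ) ^ q +
                ∑ i : Fin q, (if ε i then (1 : ℝ) else -1) * Real.sqrt ((A i : ℝ)) *
                  ((1 + ∑ j, A j ^ 2 : ℤ) : ℝ) ^ (i : ℕ)))) = 0 :=
  relation_combining_general q A hA B C D hB
end

section
/- Let A, B, C be natural numbers with A > 1, B > 0, and C > 0. Then C = ψ_A(B) if and only if there exist natural numbers i and j such that, setting D = (A² − 1)·C² + 1, E = 2·(i + 1)·D·C², F = (A² − 1)·E² + 1, G = A + F·(F − A), H = B + 2·j·C, and I = (G² − 1)·H² + 1, the following hold: D·F·I is a perfect square, F divides H − C (as integers), and B ≤ C. -/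
/-!
`D`, `F`, `I` are values `(a² − 1)y² + 1` of the Pell form, and they are pairwise coprime
(`F ≡ I ≡ 1 (mod D)`, `I ≡ D (mod F)`), so `DFI` is a square exactly when each factor is, i.e.
when `C = ψ_A(n)`, `E = ψ_A(m)` and `H = ψ_G(r)` for some `n, m, r`. Since `G ≡ A (mod F)`
and `F = x_A(m)²`, the congruence `F ∣ H − C` says `ψ_A(r) ≡ ψ_A(n) (mod x_A(m))`, which
forces `r ≡ ±n (mod 2m)`. As `C² ∣ E` gives `C ∣ m`, and `G ≡ 1 (mod 2C)` gives
`H ≡ r (mod 2C)`, we get `B ≡ ±n (mod 2C)`, whence `B = n` because both lie in `(0, C]`.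
Conversely, some `ψ_A(m)` is a multiple of `2DC²` by pigeonhole, and `H := ψ_G(B)` satisfies
`H ≡ B (mod 2C)`.
-/

open Pell

namespace MatiyasevichRobinson

theorem eq_of_modEq_or_add_modEq_zero {b n c : ℕ} (hb : 0 < b) (hbc : b ≤ c) (hnc : n ≤ c)
    (h : b ≡ n [MOD 2 * c] ∨ b + n ≡ 0 [MOD 2 * c]) : b = n := by
  rcases h with h | h
  · exact h.eq_of_lt_of_lt (by omega) (by omega)
  · have := Nat.le_of_dvd (by omega) (Nat.modEq_zero_iff_dvd.1 h)
    omega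

theorem coprime_of_modEq {x y z : ℕ} (h : y ≡ z [MOD x]) (hz : x.Coprime z) : x.Coprime y := by
  rw [Nat.coprime_comm, Nat.Coprime, h.gcd_eq, Nat.gcd_comm]
  exact hz

theorem isSquare_of_coprime_of_isSquare_mul {x y : ℕ} (hxy : x.Coprime y)
    (h : IsSquare (x * y)) : IsSquare x := by
  obtain ⟨c, hc⟩ := (isSquare_iff_exists_sq _).1 h
  exact (isSquare_iff_exists_sq _).2 (exists_eq_pow_of_mul_eq_pow (Nat.isUnit_iff.2 hxy) hc)

theorem isSquare_of_isSquare_mul_mul {x y z : ℕ} (hxy : x.Coprime y) (hxz : x.Coprime z)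
    (hyz : y.Coprime z) (h : IsSquare (x * y * z)) : IsSquare x ∧ IsSquare y ∧ IsSquare z := by
  refine ⟨isSquare_of_coprime_of_isSquare_mul (hxy.mul_right hxz) (by rwa [← mul_assoc]),
    isSquare_of_coprime_of_isSquare_mul (hxy.symm.mul_right hyz) ?_,
    isSquare_of_coprime_of_isSquare_mul (hxz.symm.mul_right hyz.symm) ?_⟩
  · rwa [mul_left_comm, ← mul_assoc]
  · rwa [mul_comm]

/-- `D`, `F` and `I` in the theorem are `pellForm A C`, `pellForm A E` and `pellForm G H`. -/
def pellForm (a y : ℕ) : ℕ := (a ^ 2 - 1) * y ^ 2 + 1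

theorem pellForm_pos (a y : ℕ) : 0 < pellForm a y := Nat.succ_pos _

theorem pellForm_one_left (y : ℕ) : pellForm 1 y = 1 := by simp [pellForm]

theorem le_pellForm (a : ℕ) {y : ℕ} (hy : 0 < y) : a ≤ pellForm a y := by
  have ha : a ≤ a ^ 2 := Nat.le_self_pow two_ne_zero a
  have hy : a ^ 2 - 1 ≤ (a ^ 2 - 1) * y ^ 2 := Nat.le_mul_of_pos_right _ (pow_pos hy 2)
  unfold pellForm
  omega

theorem pellForm_modEq {a b x y k : ℕ} (ha : 0 < a) (hb : 0 < b) (hab : a ≡ b [MOD k])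
    (hxy : x ≡ y [MOD k]) : pellForm a x ≡ pellForm b y [MOD k] := by
  have hsq : a ^ 2 - 1 ≡ b ^ 2 - 1 [MOD k] := by
    refine Nat.ModEq.add_right_cancel' 1 ?_
    rw [Nat.sub_add_cancel (Nat.one_le_pow _ _ ha), Nat.sub_add_cancel (Nat.one_le_pow _ _ hb)]
    exact hab.pow 2
  exact (hsq.mul (hxy.pow 2)).add_right 1

theorem pellForm_modEq_one {a y k : ℕ} (hy : k ∣ y) : pellForm a y ≡ 1 [MOD k] :=
  (Nat.modEq_zero_iff_dvd.2 (dvd_mul_of_dvd_right (dvd_pow hy two_ne_zero) _)).add_right 1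

theorem add_pellForm_mul_modEq_one {a y : ℕ} (hy : 0 < y) :
    a + pellForm a y * (pellForm a y - a) ≡ 1 [MOD y] := by
  have hF : pellForm a y ≡ 1 [MOD y] := pellForm_modEq_one dvd_rfl
  calc a + pellForm a y * (pellForm a y - a) ≡ a + 1 * (pellForm a y - a) [MOD y] :=
        (hF.mul_right _).add_left a
    _ = pellForm a y := by rw [one_mul, Nat.add_sub_cancel' (le_pellForm a hy)]
    _ ≡ 1 [MOD y] := hF

variable {a : ℕ} (ha : 1 < a)

theorem pellForm_yn (n : ℕ) : pellForm a (yn ha n) = xn ha n ^ 2 := by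
  have h : xn ha n * xn ha n - (a * a - 1) * yn ha n * yn ha n = 1 := pell_eq ha n
  rw [pellForm, sq, sq, sq, ← mul_assoc]
  omega

theorem exists_eq_yn_of_isSquare {y : ℕ} (h : IsSquare (pellForm a y)) : ∃ n, y = yn ha n := by
  obtain ⟨x, hx⟩ := h
  have hpell : x * x - (a * a - 1) * y * y = 1 := by
    rw [← hx, pellForm, sq, sq, ← mul_assoc]
    omega
  obtain ⟨n, -, hn⟩ := eq_pell ha hpell
  exact ⟨n, hn⟩

theorem yn_modEq_self {k : ℕ} (hk : a ≡ 1 [MOD k]) (n : ℕ) : yn ha n ≡ n [MOD k] :=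
  (yn_modEq_a_sub_one ha n).of_dvd ((Nat.modEq_iff_dvd' ha.le).1 hk.symm)

theorem exists_pos_dvd_yn {N : ℕ} (hN : 0 < N) : ∃ m, 0 < m ∧ N ∣ yn ha m := by
  have : NeZero N := ⟨hN.ne'⟩
  have of_lt : ∀ k l, k < l → (xn ha k : ZMod N) = xn ha l → (yn ha k : ZMod N) = yn ha l →
      ∃ m, 0 < m ∧ N ∣ yn ha m := by
    intro k l hkl hx hy
    refine ⟨l - k, Nat.sub_pos_of_lt hkl, (ZMod.natCast_eq_zero_iff _ _).1 ?_⟩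
    have h := congrArg (Int.cast : ℤ → ZMod N) (yz_sub ha hkl.le)
    simp only [yz, xz, Int.cast_sub, Int.cast_mul, Int.cast_natCast] at h
    rw [h, hx, hy, mul_comm, sub_self]
  obtain ⟨k, l, hne, heq⟩ := Finite.exists_ne_map_eq_of_infinite
    fun n => ((xn ha n : ZMod N), (yn ha n : ZMod N))
  simp only [Prod.mk.injEq] at heq
  rcases hne.lt_or_gt with hkl | hlk
  · exact of_lt k l hkl heq.1 heq.2
  · exact of_lt l k hlk heq.1.symm heq.2.symm

theorem modEq_of_yn_modEq {m n r : ℕ} (hnm : n < m)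
    (h : yn ha r ≡ yn ha n [MOD xn ha m]) : r ≡ n [MOD 2 * m] ∨ r + n ≡ 0 [MOD 2 * m] := by
  -- With `d = a² - 1`, modulo `x_m`:
  -- `x_{3m+r} ≡ -x_{m+r} ≡ -d y_m y_r ≡ -d y_m y_n ≡ x_{m-n}`; now use `modEq_of_xn_modEq`.
  have hx : xn ha (2 * m + (m + r)) ≡ xn ha (m - n) [MOD xn ha m] := by
    obtain ⟨u, hu⟩ := Nat.modEq_iff_dvd.1 (xn_modEq_x2n_add ha m (m + r))
    obtain ⟨v, hv⟩ := Nat.modEq_iff_dvd.1 h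
    have hadd := congrArg (Nat.cast : ℕ → ℤ) (xn_add ha m r)
    have hsub := xz_sub ha hnm.le
    push_cast at hadd hu hv
    simp only [xz, yz, dz_val, az] at hsub
    rw [dz_val, az] at hadd
    refine Nat.modEq_iff_dvd.2 ⟨xn ha n + xn ha r + u - ((a : ℤ) * a - 1) * yn ha m * v, ?_⟩
    linear_combination hsub + hu + hadd - ((a : ℤ) * a - 1) * yn ha m * hv
  rcases modEq_of_xn_modEq ha (Nat.sub_pos_of_lt hnm) (Nat.sub_le m n) hx with h1 | h1 <;>
    rw [Nat.modEq_iff_dvd] at h1 <;> push_cast [Nat.cast_sub hnm.le] at h1 <;>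
    obtain ⟨k, hk⟩ := h1
  · refine Or.inr (Nat.modEq_iff_dvd.2 ⟨2 * k + 1, ?_⟩)
    push_cast
    linear_combination hk
  · refine Or.inl (Nat.modEq_iff_dvd.2 ⟨2 * k + 2, ?_⟩)
    push_cast
    linear_combination hk

theorem exists_yn_eq_mul_succ {N : ℕ} (hN : 0 < N) : ∃ m i, yn ha m = N * (i + 1) := by
  obtain ⟨m, hm, k, hk⟩ := exists_pos_dvd_yn ha hN
  obtain ⟨i, rfl⟩ := Nat.exists_eq_add_one.2 <|
    Nat.pos_of_mul_pos_left (hk ▸ strictMono_y ha hm : 0 < N * k)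
  exact ⟨m, i, hk⟩

theorem exists_yn_eq_add_mul {c : ℕ} (hc : a ≡ 1 [MOD 2 * c]) (n : ℕ) :
    ∃ j, yn ha n = n + 2 * j * c := by
  obtain ⟨j, hj⟩ := (Nat.modEq_iff_dvd' (yn_ge_n ha n)).1 (yn_modEq_self ha hc n).symm
  exact ⟨j, by rw [mul_right_comm, ← hj, Nat.add_sub_cancel' (yn_ge_n ha n)]⟩

theorem isSquare_mul_of_eq_yn {b e g h m : ℕ} (hg : 1 < g) (he : yn ha m = e)
    (hh : yn hg b = h) (hga : g ≡ a [MOD pellForm a e]) :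
    IsSquare (pellForm a (yn ha b) * pellForm a e * pellForm g h) ∧
      h ≡ yn ha b [MOD pellForm a e] := by
  subst he hh
  refine ⟨⟨xn ha b * xn ha m * xn hg b, ?_⟩, (xy_modEq_of_modEq hg ha hga b).2⟩
  rw [pellForm_yn, pellForm_yn, pellForm_yn]
  ring

theorem eq_yn_of_isSquare_mul {b c e g h : ℕ} (hg : 1 < g) (hb : 0 < b) (hbc : b ≤ c)
    (he0 : 0 < e) (he : 2 * pellForm a c * c ^ 2 ∣ e) (hga : g ≡ a [MOD pellForm a e])
    (hg1 : g ≡ 1 [MOD e]) (hhb : h ≡ b [MOD 2 * c]) (hhc : h ≡ c [MOD pellForm a e])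
    (hsq : IsSquare (pellForm a c * pellForm a e * pellForm g h)) : c = yn ha b := by
  have hde : pellForm a c ∣ e := (Dvd.intro (2 * c ^ 2) (by ring)).trans he
  have hce : c ^ 2 ∣ e := (Dvd.intro_left _ rfl).trans he
  have h2ce : 2 * c ∣ e := (Dvd.intro (pellForm a c * c) (by ring)).trans he
  have hdf : (pellForm a c).Coprime (pellForm a e) :=
    coprime_of_modEq (pellForm_modEq_one hde) (Nat.coprime_one_right _)
  obtain ⟨hdsq, hfsq, hisq⟩ := isSquare_of_isSquare_mul_mul hdf
    (coprime_of_modEq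
      (pellForm_one_left h ▸ pellForm_modEq (by omega) one_pos (hg1.of_dvd hde) rfl)
      (Nat.coprime_one_right _))
    (coprime_of_modEq (pellForm_modEq (by omega) (by omega) hga hhc) hdf.symm) hsq
  obtain ⟨n, rfl⟩ := exists_eq_yn_of_isSquare ha hdsq
  obtain ⟨m, rfl⟩ := exists_eq_yn_of_isSquare ha hfsq
  obtain ⟨r, rfl⟩ := exists_eq_yn_of_isSquare hg hisq
  have hnm : n < m := by
    refine (strictMono_y ha).lt_iff_lt.1 ?_
    have := Nat.le_of_dvd he0 he
    nlinarith [pellForm_pos a (yn ha n), Nat.le_self_pow two_ne_zero (yn ha n)]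
  have hnm' : 2 * yn ha n ∣ 2 * m :=
    Nat.mul_dvd_mul_left 2 (dvd_of_ysq_dvd ha (by rwa [← sq]))
  have hrn := modEq_of_yn_modEq ha hnm <|
    (((xy_modEq_of_modEq hg ha hga r).2.symm.trans hhc).of_dvd
      (Dvd.intro_left _ (pellForm_yn ha m).symm))
  have hbr : b ≡ r [MOD 2 * yn ha n] := hhb.symm.trans (yn_modEq_self hg (hg1.of_dvd h2ce) r)
  rw [eq_of_modEq_or_add_modEq_zero hb hbc (yn_ge_n ha n) <|
    hrn.imp (fun h => hbr.trans (h.of_dvd hnm')) (fun h => (hbr.add_right n).trans (h.of_dvd hnm'))]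

end MatiyasevichRobinson

open MatiyasevichRobinson

theorem psi_characterization_general (A B C : ℕ) (hA : 1 < A) (hB : 0 < B) :
    C = Pell.yn hA B ↔
      ∃ i j : ℕ,
        let D := (A ^ 2 - 1) * C ^ 2 + 1
        let E := 2 * (i + 1) * D * C ^ 2
        let F := (A ^ 2 - 1) * E ^ 2 + 1
        let G := A + F * (F - A)
        let H := B + 2 * j * C
        let I := (G ^ 2 - 1) * H ^ 2 + 1
        (∃ a : ℕ, D * F * I = a ^ 2) ∧ (F : ℤ) ∣ (H : ℤ) - (C : ℤ) ∧ B ≤ C := by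
  constructor
  · rintro rfl
    have hCpos : 0 < yn hA B := strictMono_y hA hB
    obtain ⟨m, i, hm⟩ := exists_yn_eq_mul_succ hA
      (Nat.mul_pos (Nat.mul_pos two_pos (pellForm_pos A (yn hA B))) (pow_pos hCpos 2))
    set E := 2 * (i + 1) * pellForm A (yn hA B) * yn hA B ^ 2 with hEdef
    have hE0 : 0 < E :=
      Nat.mul_pos (Nat.mul_pos (by positivity) (pellForm_pos _ _)) (pow_pos hCpos 2)
    have hE : yn hA m = E := by rw [hm, hEdef]; ring
    have hG : 1 < A + pellForm A E * (pellForm A E - A) := hA.trans_le (Nat.le_add_right _ _)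
    obtain ⟨j, hj⟩ := exists_yn_eq_add_mul hG (c := yn hA B)
      ((add_pellForm_mul_modEq_one hE0).of_dvd
        (Dvd.intro (pellForm A (yn hA B) * (i + 1) * yn hA B) (by rw [hEdef]; ring))) B
    obtain ⟨hsq, hHC⟩ := isSquare_mul_of_eq_yn hA hG hE hj (Nat.add_mul_mod_self_left _ _ _)
    exact ⟨i, j, (isSquare_iff_exists_sq _).1 hsq, Nat.modEq_iff_dvd.1 hHC.symm, yn_ge_n hA B⟩
  · rintro ⟨i, j, hsq, hFHC, hBC⟩
    have hE : 0 < 2 * (i + 1) * pellForm A C * C ^ 2 :=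
      Nat.mul_pos (Nat.mul_pos (by positivity) (pellForm_pos _ _)) (pow_pos (hB.trans_le hBC) 2)
    exact eq_yn_of_isSquare_mul hA (hA.trans_le (Nat.le_add_right _ _)) hB hBC hE
      (Dvd.intro (i + 1) (by ring)) (Nat.add_mul_mod_self_left _ _ _)
      (add_pellForm_mul_modEq_one hE)
      (by rw [mul_right_comm]; exact Nat.add_mul_mod_self_left _ _ _)
      (Nat.modEq_iff_dvd.2 hFHC).symm ((isSquare_iff_exists_sq _).2 hsq)

/-- **Theorem 4 of Matiyasevich–Robinson (1975).** For `A > 1`, `B > 0`, `C > 0`: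
`C = ψ_A(B)` iff there exist `i`, `j` such that, with
`D = (A² − 1)C² + 1`, `E = 2(i+1)DC²`, `F = (A² − 1)E² + 1`, `G = A + F(F − A)`,
`H = B + 2jC`, `I = (G² − 1)H² + 1`, the number `DFI` is a perfect square,
`F ∣ H − C` (as integers), and `B ≤ C`. -/
theorem psi_characterization (A B C : ℕ) (hA : 1 < A) (hB : 0 < B) (hC : 0 < C) :
    C = Pell.yn hA B ↔
      ∃ i j : ℕ,
        let D := (A ^ 2 - 1) * C ^ 2 + 1
        let E := 2 * (i + 1) * D * C ^ 2
        let F := (A ^ 2 - 1) * E ^ 2 + 1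
        let G := A + F * (F - A)
        let H := B + 2 * j * C
        let I := (G ^ 2 - 1) * H ^ 2 + 1
        (∃ a : ℕ, D * F * I = a ^ 2) ∧ (F : ℤ) ∣ (H : ℤ) - (C : ℤ) ∧ B ≤ C :=
  psi_characterization_general A B C hA hB
end

section
/- Let n, s, y be natural numbers with n ≥ s ≥ 1. Then y = C(n, s) if and only if there exists a natural number x with x > 4·n^s such that y is the remainder of ⌊(x + 1)^n / x^s⌋ modulo x. -/
/-!
By the binomial theorem `(x + 1)ⁿ = ∑ C(n, k) xᵏ`. Once `x` exceeds every `C(n, k)` with `k ≤ s`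
(and `C(n, k) ≤ nᵏ ≤ nˢ < x` there), these coefficients are the lowest `s + 1` digits of
`(x + 1)ⁿ` in base `x`, so `⌊(x + 1)ⁿ / xˢ⌋ mod x` is the digit `C(n, s)`.
-/

open Finset

theorem sum_range_mul_pow_lt {x : ℕ} (c : ℕ → ℕ) {s : ℕ} (hc : ∀ k < s, c k < x) :
    ∑ k ∈ range s, c k * x ^ k < x ^ s := by
  induction s with
  | zero => simp
  | succ s ih =>
    calc ∑ k ∈ range (s + 1), c k * x ^ k
        = ∑ k ∈ range s, c k * x ^ k + c s * x ^ s := sum_range_succ _ _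
      _ < x ^ s + c s * x ^ s := by gcongr; exact ih fun k hk => hc k (by omega)
      _ ≤ x ^ (s + 1) := by
        rw [pow_succ, ← one_add_mul, mul_comm]
        exact Nat.mul_le_mul_left _ (by have := hc s s.lt_succ_self; omega)

theorem sum_range_mul_pow_div_pow_mod {x : ℕ} (c : ℕ → ℕ) {s N : ℕ} (hsN : s < N)
    (hc : ∀ k ≤ s, c k < x) :
    (∑ k ∈ range N, c k * x ^ k) / x ^ s % x = c s := by
  obtain ⟨m, rfl⟩ := Nat.exists_eq_add_of_lt hsN
  have hx : 0 < x := (Nat.zero_le _).trans_lt (hc s le_rfl)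
  have hsplit : ∑ k ∈ range (s + m + 1), c k * x ^ k =
      ∑ k ∈ range s, c k * x ^ k + x ^ s * (c s + x * ∑ k ∈ range m, c (s + 1 + k) * x ^ k) := by
    rw [add_assoc, sum_range_add, sum_range_succ', mul_add, mul_sum, mul_sum]
    congr 1
    rw [add_comm, add_zero, mul_comm]
    congr 1
    refine sum_congr rfl fun k _ => ?_
    rw [show s + (k + 1) = s + 1 + k by omega]
    ring
  rw [hsplit, Nat.add_mul_div_left _ _ (pow_pos hx s),
    Nat.div_eq_of_lt (sum_range_mul_pow_lt c fun k hk => hc k hk.le), zero_add,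
    Nat.add_mul_mod_self_left, Nat.mod_eq_of_lt (hc s le_rfl)]

theorem add_one_pow_eq_sum (x n : ℕ) : (x + 1) ^ n = ∑ k ∈ range (n + 1), n.choose k * x ^ k := by
  simp [add_pow, mul_comm]

theorem add_one_pow_div_pow_mod {n s x : ℕ} (hsn : s ≤ n) (hchoose : ∀ k ≤ s, n.choose k < x) :
    (x + 1) ^ n / x ^ s % x = n.choose s := by
  rw [add_one_pow_eq_sum]
  exact sum_range_mul_pow_div_pow_mod _ (Nat.lt_succ_of_le hsn) hchoose

theorem choose_le_pow_of_le {n k s : ℕ} (hn : 0 < n) (hks : k ≤ s) : n.choose k ≤ n ^ s :=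
  (Nat.choose_le_pow n k).trans (Nat.pow_le_pow_right hn hks)

/-- For `n ≥ s ≥ 1`, `y = C(n, s)` iff there is an `x > 4·nˢ` with
`y = rem(⌊(x+1)ⁿ / xˢ⌋, x)`. -/
theorem choose_eq_iff_rem_div (n s y : ℕ) (hs : 1 ≤ s) (hns : s ≤ n) :
    y = n.choose s ↔
      ∃ x : ℕ, 4 * n ^ s < x ∧ y = ((x + 1) ^ n / x ^ s) % x := by
  have hn : 0 < n := hs.trans hns
  have key : ∀ x, 4 * n ^ s < x → (x + 1) ^ n / x ^ s % x = n.choose s := fun x hx =>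
    add_one_pow_div_pow_mod hns fun k hk => (choose_le_pow_of_le hn hk).trans_lt (by omega)
  constructor
  · rintro rfl
    exact ⟨4 * n ^ s + 1, by omega, (key _ (by omega)).symm⟩
  · rintro ⟨x, hx, rfl⟩
    exact key x hx
end

section
/- Let n, s, x be natural numbers with n ≥ s ≥ 1 and x > n^s. Then C(n, s) equals the remainder of ⌊(x + 1)^n / x^s⌋ modulo x. -/
open Finset

/-
In base `x`, `(x + 1)ⁿ = ∑ₖ C(n, k) xᵏ`, and the hypothesis `x > nˢ` makes every coefficient
`C(n, k) ≤ nᵏ` with `k ≤ s` a genuine base-`x` digit. Hence the terms with `k < s` add up to less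
than `xˢ`, so dividing by `xˢ` discards exactly them, and reducing modulo `x` leaves the digit
`C(n, s)`.
-/

theorem sum_range_pow_mul_lt_pow {x s : ℕ} {d : ℕ → ℕ} (hd : ∀ k < s, d k < x) :
    ∑ k ∈ range s, x ^ k * d k < x ^ s := by
  induction s with
  | zero => simp
  | succ s ih =>
    have hlow := ih fun k hk => hd k (by omega)
    calc ∑ k ∈ range (s + 1), x ^ k * d k
        = ∑ k ∈ range s, x ^ k * d k + x ^ s * d s := sum_range_succ _ _
      _ < x ^ s * (d s + 1) := by linarith
      _ ≤ x ^ s * x := Nat.mul_le_mul_left _ (hd s s.lt_add_one)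
      _ = x ^ (s + 1) := (pow_succ x s).symm

theorem sum_range_pow_mul_eq (x s m : ℕ) (d : ℕ → ℕ) :
    ∑ k ∈ range (s + (m + 1)), x ^ k * d k =
      ∑ k ∈ range s, x ^ k * d k + x ^ s * (d s + x * ∑ k ∈ range m, x ^ k * d (s + (k + 1))) := by
  rw [sum_range_add, sum_range_succ', mul_add, mul_sum, mul_sum]
  simp only [pow_add, pow_succ]
  ring_nf

theorem add_mul_div_pow_mod {x s low d q : ℕ} (hlow : low < x ^ s) (hd : d < x) :
    (low + x ^ s * (d + x * q)) / x ^ s % x = d := by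
  have hxs : 0 < x ^ s := by omega
  rw [Nat.add_mul_div_left _ _ hxs, Nat.div_eq_of_lt hlow, zero_add, Nat.add_mul_mod_self_left,
    Nat.mod_eq_of_lt hd]

theorem choose_lt_of_pow_lt {n s k x : ℕ} (hk : k ≤ s) (hns : s ≤ n) (hx : n ^ s < x) :
    n.choose k < x := by
  rcases Nat.eq_zero_or_pos n with rfl | hn
  · obtain ⟨rfl, rfl⟩ : k = 0 ∧ s = 0 := by omega
    simpa using hx
  · calc n.choose k ≤ n ^ k := Nat.choose_le_pow n k
      _ ≤ n ^ s := Nat.pow_le_pow_right hn hk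
      _ < x := hx

theorem choose_eq_rem_div_general (n s x : ℕ) (hns : s ≤ n) (hx : n ^ s < x) :
    n.choose s = ((x + 1) ^ n / x ^ s) % x := by
  have hexpand : (x + 1) ^ n = ∑ k ∈ range (s + (n - s + 1)), x ^ k * n.choose k := by
    rw [add_pow, show s + (n - s + 1) = n + 1 by omega]
    simp
  rw [hexpand, sum_range_pow_mul_eq, add_mul_div_pow_mod]
  · exact sum_range_pow_mul_lt_pow fun k hk => choose_lt_of_pow_lt hk.le hns hx
  · exact choose_lt_of_pow_lt le_rfl hns hx

/-- For `n ≥ s ≥ 1` and `x > nˢ`, the binomial coefficient `C(n, s)` equals the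
remainder of `⌊(x+1)ⁿ / xˢ⌋` modulo `x`. -/
theorem choose_eq_rem_div (n s x : ℕ) (hs : 1 ≤ s) (hns : s ≤ n) (hx : n ^ s < x) :
    n.choose s = ((x + 1) ^ n / x ^ s) % x :=
  choose_eq_rem_div_general n s x hns hx
end

section
/- Let n, s, x be natural numbers with n ≥ s ≥ 1 and x > n^s. Then ⌊(x + 1)^n / x^s⌋ = Σ_{i=0}^{n−s} C(n, s + i)·x^i. -/
open Finset

/-!
Split the binomial expansion of `(x + 1)ⁿ` at degree `s`: the terms of degree `≥ s` are `xˢ` times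
the claimed sum, and the terms of degree `< s` add up to less than `xˢ`, because their coefficients
sum to at most `nˢ < x` and each power is at most `xˢ⁻¹`. So the claimed sum is the quotient of
`(x + 1)ⁿ` by `xˢ`.
-/

theorem add_one_pow_eq_sum_range_add_sum_mul_pow {R : Type*} [CommSemiring R] (x : R)
    {n s : ℕ} (h : s ≤ n) :
    (x + 1) ^ n = ∑ k ∈ range s, (n.choose k : R) * x ^ k +
      (∑ i ∈ range (n - s + 1), (n.choose (s + i) : R) * x ^ i) * x ^ s := by
  rw [add_pow, show n + 1 = s + (n - s + 1) by omega, sum_range_add, sum_mul]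
  congr 1 <;> refine sum_congr rfl fun i _ => ?_
  · simp only [one_pow, mul_one, mul_comm]
  · rw [one_pow, mul_one, pow_add]
    ring

theorem Nat.sum_range_choose_le_pow {n s : ℕ} (h : s ≤ n) :
    ∑ k ∈ range s, n.choose k ≤ n ^ s := by
  cases s with
  | zero => simp
  | succ t =>
    calc ∑ k ∈ range (t + 1), n.choose k
        ≤ ∑ _k ∈ range (t + 1), n ^ t := by
          refine sum_le_sum fun k hk => (Nat.choose_le_pow n k).trans ?_
          exact Nat.pow_le_pow_right (by omega) (by simpa [Nat.lt_succ_iff] using hk)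
      _ = (t + 1) * n ^ t := by rw [sum_const, card_range, smul_eq_mul]
      _ ≤ n ^ (t + 1) := by rw [pow_succ']; exact Nat.mul_le_mul_right _ h

theorem Nat.sum_range_choose_mul_pow_lt {n s x : ℕ} (h : s ≤ n) (hx : n ^ s < x) :
    ∑ k ∈ range s, n.choose k * x ^ k < x ^ s := by
  cases s with
  | zero => simp
  | succ t =>
    have hx0 : 0 < x := Nat.zero_lt_of_lt hx
    calc ∑ k ∈ range (t + 1), n.choose k * x ^ k
        ≤ (∑ k ∈ range (t + 1), n.choose k) * x ^ t := by
          rw [sum_mul]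
          refine sum_le_sum fun k hk => Nat.mul_le_mul_left _ ?_
          exact Nat.pow_le_pow_right hx0 (by simpa [Nat.lt_succ_iff] using hk)
      _ ≤ n ^ (t + 1) * x ^ t := Nat.mul_le_mul_right _ (Nat.sum_range_choose_le_pow h)
      _ < x * x ^ t := Nat.mul_lt_mul_of_pos_right hx (pow_pos hx0 t)
      _ = x ^ (t + 1) := Nat.pow_succ'.symm

theorem div_pow_eq_partial_binomial_expansion_general (n s x : ℕ) (hns : s ≤ n)
    (hx : n ^ s < x) :
    (x + 1) ^ n / x ^ s = ∑ i ∈ Finset.range (n - s + 1), n.choose (s + i) * x ^ i := by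
  rw [add_one_pow_eq_sum_range_add_sum_mul_pow x hns]
  simp only [Nat.cast_id]
  rw [Nat.add_mul_div_right _ _ (pow_pos (Nat.zero_lt_of_lt hx) s),
    Nat.div_eq_of_lt (Nat.sum_range_choose_mul_pow_lt hns hx), zero_add]

/-- For `n ≥ s ≥ 1` and `x > nˢ`, the floor `⌊(x+1)ⁿ / xˢ⌋` is the partial
binomial expansion `Σ_{i=0}^{n−s} C(n, s+i)·xⁱ`. -/
theorem div_pow_eq_partial_binomial_expansion (n s x : ℕ) (hs : 1 ≤ s) (hns : s ≤ n)
    (hx : n ^ s < x) :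
    (x + 1) ^ n / x ^ s = ∑ i ∈ Finset.range (n - s + 1), n.choose (s + i) * x ^ i :=
  div_pow_eq_partial_binomial_expansion_general n s x hns hx
end

section
/- Let y₁, z, w be natural numbers with y₁ ≥ 1. Then y₁ divides C(z, w) if and only if there exist natural numbers u, p, q such that (u + 1)^z = p·u^w + q, u ≥ 2^z, q < u^w, y₁ divides u, and y₁ divides p. -/
/-! If `2 ^ z ≤ u` and `1 < u`, every `C(z, k)` is smaller than `u`, so the binomial expansion
`(u + 1) ^ z = ∑ C(z, k) u ^ k` is the base-`u` expansion of `(u + 1) ^ z`. Hence the quotient `p`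
of `(u + 1) ^ z` by `u ^ w` satisfies `p ≡ C(z, w) [MOD u]`, and when `y₁ ∣ u` this gives
`y₁ ∣ p ↔ y₁ ∣ C(z, w)`. -/

theorem ofDigits_map_choose_range (u z : ℕ) :
    Nat.ofDigits u ((List.range (z + 1)).map z.choose) = (u + 1) ^ z := by
  rw [Nat.ofDigits_eq_sum_mapIdx, List.mapIdx_eq_ofFn]
  simp [add_pow, Finset.sum_range, mul_comm, List.sum_ofFn, Fin.sum_univ_succ]

theorem add_one_pow_div_pow_mod_eq_choose {u z : ℕ} (h : ∀ k, z.choose k < u) (w : ℕ) :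
    (u + 1) ^ z / u ^ w % u = z.choose w := by
  have hu : 1 < u := by simpa using h z
  rw [← Nat.getD_digits _ _ hu, ← ofDigits_map_choose_range, Nat.digits_ofDigits _ hu]
  · rw [List.getD_eq_getElem?_getD]
    rcases Nat.lt_or_ge w (z + 1) with hw | hw
    · simp [hw]
    · have : (List.range (z + 1)).length ≤ w := by simpa using hw
      simp [List.getElem?_eq_none this, Nat.choose_eq_zero_of_lt (by omega : z < w)]
  · simpa using fun k _ => h k
  · simp [List.getLast_map, List.getLast_range]

theorem choose_lt_of_two_pow_le {u z : ℕ} (hz : 2 ^ z ≤ u) (hu : 1 < u) (k : ℕ) :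
    z.choose k < u := by
  rcases z.eq_zero_or_pos with rfl | hz₀
  · exact (Nat.choose_le_two_pow 0 k).trans_lt hu
  · exact (Nat.choose_lt_two_pow z k hz₀).trans_le hz

theorem dvd_add_one_pow_div_pow_iff_dvd_choose {y u z : ℕ} (hyu : y ∣ u) (hz : 2 ^ z ≤ u)
    (w : ℕ) : y ∣ (u + 1) ^ z / u ^ w ↔ y ∣ z.choose w := by
  obtain rfl | hu : u = 1 ∨ 1 < u := by have := Nat.one_le_two_pow (n := z); omega
  · simp [Nat.dvd_one.1 hyu]
  · rw [← Nat.dvd_mod_iff hyu, add_one_pow_div_pow_mod_eq_choose (choose_lt_of_two_pow_le hz hu)]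

/-- Variable-efficient exponential Diophantine representation of the relation
`y₁ ∣ C(z, w)`: for `y₁ ≥ 1`, `y₁` divides `C(z, w)` iff there exist `u, p, q`
with `(u+1)^z = p·u^w + q`, `u ≥ 2^z`, `q < u^w`, `y₁ ∣ u`, and `y₁ ∣ p`. -/
theorem dvd_choose_iff (y₁ z w : ℕ) (hy : 1 ≤ y₁) :
    y₁ ∣ z.choose w ↔
      ∃ u p q : ℕ,
        (u + 1) ^ z = p * u ^ w + q ∧ 2 ^ z ≤ u ∧ q < u ^ w ∧ y₁ ∣ u ∧ y₁ ∣ p := by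
  constructor
  · intro h
    set u := 2 ^ z * y₁
    have hyu : y₁ ∣ u := dvd_mul_left _ _
    have hz : 2 ^ z ≤ u := Nat.le_mul_of_pos_right _ hy
    exact ⟨u, (u + 1) ^ z / u ^ w, (u + 1) ^ z % u ^ w, (Nat.div_add_mod' _ _).symm, hz,
      Nat.mod_lt _ (by positivity), hyu, (dvd_add_one_pow_div_pow_iff_dvd_choose hyu hz w).2 h⟩
  · rintro ⟨u, p, q, heq, hz, hq, hyu, hyp⟩
    have hp : p = (u + 1) ^ z / u ^ w := by
      rw [heq, add_comm, Nat.add_mul_div_right _ _ (pow_pos ((Nat.two_pow_pos z).trans_le hz) w),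
        Nat.div_eq_of_lt hq, zero_add]
    exact (dvd_add_one_pow_div_pow_iff_dvd_choose hyu hz w).1 (hp ▸ hyp)
end

section
/- For every natural number m and every natural number a ≥ 2, the Goodstein sequence for m starting at base a terminates: defining m₀ = m and m_{i+1} = G_{a+i}(m_i), there exists a natural number k with m_k = 0. -/
/-- Hereditary base-change function `B_n`: `baseChange n m` replaces every
occurrence of `n` by `n + 1` in the hereditary base-`n` representation of `m`
(for `n ≥ 2`). It is defined by peeling off the leading base-`n` digit:
if `m > 0` and `e = log_n m`, then
`B_n(m) = (m / n^e) · (n+1)^{B_n(e)} + B_n(m % n^e)`, and `B_n(0) = 0`. -/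
def baseChange (n : ℕ) : ℕ → ℕ
  | 0 => 0
  | (m + 1) =>
    ((m + 1) / n ^ Nat.log n (m + 1)) * (n + 1) ^ (baseChange n (Nat.log n (m + 1))) +
      baseChange n ((m + 1) % n ^ Nat.log n (m + 1))
  decreasing_by
  · exact Nat.log_lt_self n (Nat.succ_ne_zero m)
  · have hpos : 0 < n ^ Nat.log n (m + 1) := by
      rcases Nat.eq_zero_or_pos n with h | h
      · subst h; simp
      · exact pow_pos h _
    exact Nat.lt_of_lt_of_le (Nat.mod_lt _ hpos)
      (Nat.pow_log_le_self n (Nat.succ_ne_zero m))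

/-- The Goodstein step `G_n(m) = B_n(m) − 1` for `m > 0`, and `G_n(0) = 0`
(truncated subtraction handles both cases, since `B_n(0) = 0`). -/
def goodsteinStep (n m : ℕ) : ℕ := baseChange n m - 1

/-- The Goodstein sequence for `m` starting at base `a`:
`m₀ = m` and `m_{i+1} = G_{a+i}(m_i)`. -/
def goodsteinSeq (a m : ℕ) : ℕ → ℕ
  | 0 => m
  | (i + 1) => goodsteinStep (a + i) (goodsteinSeq a m i)

/-!
Replacing the base `n` by `ω` in the hereditary base-`n` representation of `m` gives an ordinal
that is strictly monotone in `m` and invariant under the base change `B_n`. Along a Goodstein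
sequence `B_n` leaves this ordinal unchanged and the subtraction of `1` strictly decreases it,
so the ordinals form a strictly decreasing sequence as long as the terms are nonzero; since the
ordinals are well-founded, some term is `0`.
-/

open Ordinal

theorem Nat.log_mul_pow_add {b c e r : ℕ} (hc : 0 < c) (hcb : c < b) (hr : r < b ^ e) :
    Nat.log b (c * b ^ e + r) = e := by
  apply Nat.log_eq_of_pow_le_of_lt_pow
  · nlinarith
  · calc c * b ^ e + r < (c + 1) * b ^ e := by linarith
      _ ≤ b * b ^ e := Nat.mul_le_mul_right _ hcb
      _ = b ^ (e + 1) := by rw [pow_succ']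

theorem Nat.exists_eq_mul_pow_add {b m : ℕ} (hb : 2 ≤ b) (hm : m ≠ 0) :
    ∃ c e r, 0 < c ∧ c < b ∧ r < b ^ e ∧ m = c * b ^ e + r := by
  have hpow : 0 < b ^ Nat.log b m := pow_pos (by omega) _
  refine ⟨m / b ^ Nat.log b m, Nat.log b m, m % b ^ Nat.log b m,
    Nat.div_pos (Nat.pow_log_le_self b hm) hpow, ?_, Nat.mod_lt _ hpow,
    (Nat.div_add_mod' _ _).symm⟩
  rw [Nat.div_lt_iff_lt_mul hpow, ← pow_succ']
  exact Nat.lt_pow_succ_log_self hb m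

theorem Nat.mul_pow_add_induction {b : ℕ} (hb : 2 ≤ b) {P : ℕ → Prop} (zero : P 0)
    (step : ∀ c e r, 0 < c → c < b → r < b ^ e → P e → P r → P (c * b ^ e + r)) :
    ∀ m, P m := by
  intro m
  induction m using Nat.strong_induction_on with
  | _ m ih =>
    rcases eq_or_ne m 0 with rfl | hm
    · exact zero
    obtain ⟨c, e, r, hc, hcb, hr, rfl⟩ := Nat.exists_eq_mul_pow_add hb hm
    have he : e < b ^ e := Nat.lt_pow_self (by omega)
    exact step c e r hc hcb hr (ih e (by nlinarith)) (ih r (by nlinarith))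

/-- Replace `n` by `ω` in the hereditary base-`n` representation of `m`. The digit `c` of
`n ^ e` becomes `ω ^ e * c`: ordinal multiplication is not commutative. -/
noncomputable def hereditaryOrdinal (n : ℕ) : ℕ → Ordinal.{0}
  | 0 => 0
  | (m + 1) =>
    ω ^ hereditaryOrdinal n (Nat.log n (m + 1)) * ((m + 1) / n ^ Nat.log n (m + 1) : ℕ) +
      hereditaryOrdinal n ((m + 1) % n ^ Nat.log n (m + 1))
  decreasing_by
  · exact Nat.log_lt_self n (Nat.succ_ne_zero m)
  · exact (Nat.mod_lt _ (Nat.pos_of_ne_zero (by simp +contextual))).trans_le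
      (Nat.pow_log_le_self n (Nat.succ_ne_zero m))

@[simp]
theorem hereditaryOrdinal_zero (n : ℕ) : hereditaryOrdinal n 0 = 0 := by
  rw [hereditaryOrdinal]

section

variable {n m c e r : ℕ}

theorem baseChange_mul_pow_add (hc : 0 < c) (hcn : c < n) (hr : r < n ^ e) :
    baseChange n (c * n ^ e + r) = c * (n + 1) ^ baseChange n e + baseChange n r := by
  have hpow : 0 < n ^ e := by omega
  obtain ⟨k, hk⟩ := Nat.exists_eq_add_one_of_ne_zero (by positivity : c * n ^ e + r ≠ 0)
  rw [hk, baseChange, ← hk, Nat.log_mul_pow_add hc hcn hr, mul_comm c,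
    Nat.mul_add_div hpow, Nat.mul_add_mod, Nat.div_eq_of_lt hr, Nat.mod_eq_of_lt hr, add_zero]

theorem hereditaryOrdinal_mul_pow_add (hc : 0 < c) (hcn : c < n) (hr : r < n ^ e) :
    hereditaryOrdinal n (c * n ^ e + r) =
      ω ^ hereditaryOrdinal n e * c + hereditaryOrdinal n r := by
  have hpow : 0 < n ^ e := by omega
  obtain ⟨k, hk⟩ := Nat.exists_eq_add_one_of_ne_zero (by positivity : c * n ^ e + r ≠ 0)
  rw [hk, hereditaryOrdinal, ← hk, Nat.log_mul_pow_add hc hcn hr, mul_comm c,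
    Nat.mul_add_div hpow, Nat.mul_add_mod, Nat.div_eq_of_lt hr, Nat.mod_eq_of_lt hr, add_zero]

theorem hereditaryOrdinal_pow (hn : 2 ≤ n) :
    hereditaryOrdinal n (n ^ e) = ω ^ hereditaryOrdinal n e := by
  have h := hereditaryOrdinal_mul_pow_add (c := 1) one_pos (by omega) (pow_pos (by omega : 0 < n) e)
  rwa [one_mul, add_zero, hereditaryOrdinal_zero, Nat.cast_one, mul_one, add_zero] at h

theorem hereditaryOrdinal_lt_opow_of_strictMonoOn (hn : 2 ≤ n)
    (hmono : StrictMonoOn (hereditaryOrdinal n) (Set.Iic e)) (h : m < n ^ e) :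
    hereditaryOrdinal n m < ω ^ hereditaryOrdinal n e := by
  induction e using Nat.strong_induction_on generalizing m with
  | _ e ih =>
    rcases eq_or_ne m 0 with rfl | hm
    · rw [hereditaryOrdinal_zero]
      exact opow_pos _ omega0_pos
    obtain ⟨c, e₁, r, hc, hcn, hr, rfl⟩ := Nat.exists_eq_mul_pow_add hn hm
    have he₁ : e₁ < e := (Nat.pow_lt_pow_iff_right (by omega)).1
      (((Nat.le_mul_of_pos_left _ hc).trans (Nat.le_add_right _ _)).trans_lt h)
    rw [hereditaryOrdinal_mul_pow_add hc hcn hr]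
    exact opow_mul_add_lt_opow (natCast_lt_omega0 c)
      (ih e₁ he₁ (hmono.mono (Set.Iic_subset_Iic.2 he₁.le)) hr)
      (hmono (Set.mem_Iic.2 he₁.le) Set.self_mem_Iic he₁)

theorem hereditaryOrdinal_strictMono (hn : 2 ≤ n) : StrictMono (hereditaryOrdinal n) := by
  intro m m' hlt
  induction m' using Nat.strong_induction_on generalizing m with
  | _ m' ih =>
    obtain ⟨c', e, r', hc', hc'n, hr', rfl⟩ :=
      Nat.exists_eq_mul_pow_add hn (Nat.ne_zero_of_lt hlt)
    have hpow : 0 < n ^ e := pow_pos (by omega) e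
    have he : e < c' * n ^ e + r' := (Nat.lt_pow_self (by omega)).trans_le
      ((Nat.le_mul_of_pos_left _ hc').trans (Nat.le_add_right _ _))
    have hmono : StrictMonoOn (hereditaryOrdinal n) (Set.Iic e) :=
      fun x _ y hy hxy => ih y (lt_of_le_of_lt hy he) hxy
    rw [hereditaryOrdinal_mul_pow_add hc' hc'n hr']
    rcases lt_or_ge m (n ^ e) with hm | hm
    · calc hereditaryOrdinal n m < ω ^ hereditaryOrdinal n e :=
            hereditaryOrdinal_lt_opow_of_strictMonoOn hn hmono hm
        _ ≤ ω ^ hereditaryOrdinal n e * c' := le_mul_left _ (by exact_mod_cast hc')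
        _ ≤ _ := le_self_add
    obtain ⟨c, r, hr, rfl⟩ : ∃ c r, r < n ^ e ∧ m = c * n ^ e + r :=
      ⟨m / n ^ e, m % n ^ e, Nat.mod_lt _ hpow, (Nat.div_add_mod' m _).symm⟩
    have hc : 0 < c := Nat.pos_of_ne_zero (by rintro rfl; omega)
    have hcc' : c ≤ c' := by
      by_contra! h
      nlinarith
    rw [hereditaryOrdinal_mul_pow_add hc (hcc'.trans_lt hc'n) hr]
    rcases hcc'.lt_or_eq with hcc' | rfl
    · exact (opow_mul_add_lt_opow_mul (hereditaryOrdinal_lt_opow_of_strictMonoOn hn hmono hr)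
        (Nat.cast_lt.2 hcc')).trans_le le_self_add
    · exact (add_lt_add_iff_left _).2 (ih r' (by nlinarith) (by omega))

theorem hereditaryOrdinal_lt_opow (hn : 2 ≤ n) (h : m < n ^ e) :
    hereditaryOrdinal n m < ω ^ hereditaryOrdinal n e :=
  hereditaryOrdinal_lt_opow_of_strictMonoOn hn ((hereditaryOrdinal_strictMono hn).strictMonoOn _) h

theorem hereditaryOrdinal_baseChange (hn : 2 ≤ n) (m : ℕ) :
    hereditaryOrdinal (n + 1) (baseChange n m) = hereditaryOrdinal n m := by
  induction m using Nat.mul_pow_add_induction hn with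
  | zero => rw [baseChange, hereditaryOrdinal_zero, hereditaryOrdinal_zero]
  | step c e r hc hcn hr ihe ihr =>
    -- `baseChange n` is not yet known to be monotone, so compare through the ordinals
    have hlt : baseChange n r < (n + 1) ^ baseChange n e := by
      by_contra! hle
      have h := (hereditaryOrdinal_strictMono (n := n + 1) (by omega)).monotone hle
      rw [hereditaryOrdinal_pow (by omega), ihe, ihr] at h
      exact h.not_gt (hereditaryOrdinal_lt_opow hn hr)
    rw [baseChange_mul_pow_add hc hcn hr, hereditaryOrdinal_mul_pow_add hc (by omega) hlt, ihe, ihr,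
      hereditaryOrdinal_mul_pow_add hc hcn hr]

theorem hereditaryOrdinal_goodsteinStep_lt (hn : 2 ≤ n) (hm : m ≠ 0) :
    hereditaryOrdinal (n + 1) (goodsteinStep n m) < hereditaryOrdinal n m := by
  have hpos : 0 < baseChange n m := by
    obtain ⟨c, e, r, hc, hcn, hr, rfl⟩ := Nat.exists_eq_mul_pow_add hn hm
    rw [baseChange_mul_pow_add hc hcn hr]
    positivity
  rw [← hereditaryOrdinal_baseChange hn m]
  exact hereditaryOrdinal_strictMono (by omega) (Nat.sub_lt hpos one_pos)

end

/-- **Goodstein's theorem.** For every `m` and every base `a ≥ 2`, the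
Goodstein sequence for `m` starting at `a` eventually reaches `0`. -/
theorem goodstein (m a : ℕ) (ha : 2 ≤ a) : ∃ k : ℕ, goodsteinSeq a m k = 0 := by
  by_contra! hne
  refine not_strictAnti_of_wellFoundedLT (fun i => hereditaryOrdinal (a + i) (goodsteinSeq a m i))
    (strictAnti_nat_of_succ_lt fun i => ?_)
  exact hereditaryOrdinal_goodsteinStep_lt (ha.trans (Nat.le_add_right a i)) (hne i)
end
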